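/- arXiv:2109.11272 — 9 statements merged into one kernel-verified Lean document; each statement's English description precedes it below -/
import Mathlib

section
/- For all real numbers x, k, t with 0 ≤ x ≤ k ≤ 1 and t ≥ 1, we have (1+x)^t ≥ 1 + ((1+k)^t - 1)/k^t · x^t. -/
open Set

lemma key_aux (t u v : ℝ) (ht : 1 ≤ t) (hv : 0 ≤ v) (hvu : v ≤ u) :
    (v + 1) ^ t - v ^ t ≤ (u + 1) ^ t - u ^ t := by
  rcases eq_or_lt_of_le hvu with rfl | hlt
  · exact le_refl _
  have hu : 0 ≤ u := hv.trans hvu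
  have C := convexOn_rpow ht
  have h1 : ((v+1)^t - v^t) / ((v+1) - v) ≤ ((u+1)^t - v^t) / ((u+1) - v) :=
    C.secant_mono (mem_Ici.2 hv) (mem_Ici.2 (by linarith)) (mem_Ici.2 (by linarith))
      (by linarith) (by linarith) (by linarith)
  have h2 : (v^t - (u+1)^t) / (v - (u+1)) ≤ (u^t - (u+1)^t) / (u - (u+1)) :=
    C.secant_mono (mem_Ici.2 (by linarith)) (mem_Ici.2 hv) (mem_Ici.2 hu)
      (by linarith) (by linarith) (by linarith)
  have hd : (0:ℝ) < (u+1) - v := by linarith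
  rw [show (v+1) - v = (1:ℝ) by ring, div_one] at h1
  have e1 : (v^t - (u+1)^t) / (v - (u+1)) = ((u+1)^t - v^t) / ((u+1) - v) := by
    rw [← neg_div_neg_eq]; ring_nf
  have e2 : (u^t - (u+1)^t) / (u - (u+1)) = (u+1)^t - u^t := by
    rw [show u - (u+1) = (-1:ℝ) by ring]; ring
  rw [e1, e2] at h2
  calc (v+1)^t - v^t ≤ ((u+1)^t - v^t) / ((u+1) - v) := h1
    _ ≤ (u+1)^t - u^t := h2

theorem stmt_0 (x k t : ℝ) (hx : 0 ≤ x) (hxk : x ≤ k) (hk1 : k ≤ 1) (hk0 : 0 < k)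
    (ht : 1 ≤ t) :
    (1 + x) ^ t ≥ 1 + ((1 + k) ^ t - 1) / k ^ t * x ^ t := by
  have ht0 : t ≠ 0 := by positivity
  rcases eq_or_lt_of_le hx with rfl | hx0
  · simp [Real.zero_rpow ht0, Real.one_rpow]
  -- rewrite the coefficient
  have hkt : (0:ℝ) < k ^ t := Real.rpow_pos_of_pos hk0 t
  have hxt : (0:ℝ) < x ^ t := Real.rpow_pos_of_pos hx0 t
  have hc : ((1 + k) ^ t - 1) / k ^ t = (1/k + 1) ^ t - (1/k) ^ t := by
    rw [show 1/k + 1 = (1+k)/k by field_simp,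
      Real.div_rpow (by linarith) hk0.le, Real.div_rpow (by norm_num) hk0.le,
      Real.one_rpow]
    ring
  have hkey := key_aux t (1/x) (1/k) ht (by positivity)
    (by apply one_div_le_one_div_of_le hx0 hxk)
  have hmul : ((1/k + 1) ^ t - (1/k) ^ t) * x ^ t ≤ ((1/x + 1) ^ t - (1/x) ^ t) * x ^ t :=
    mul_le_mul_of_nonneg_right hkey hxt.le
  have hxx : ((1/x + 1) ^ t - (1/x) ^ t) * x ^ t = (1 + x) ^ t - 1 := by
    rw [sub_mul, ← Real.mul_rpow (by positivity) hx0.le,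
      ← Real.mul_rpow (by positivity) hx0.le]
    rw [show (1/x + 1) * x = 1 + x by field_simp, show (1/x) * x = 1 by field_simp,
      Real.one_rpow]
  rw [hc]
  rw [hxx] at hmul
  linarith
end

section
/- For all real numbers x, k, t with 0 ≤ x ≤ k ≤ 1 and 0 ≤ t ≤ 1, we have (1+x)^t ≤ 1 + ((1+k)^t - 1)/k^t · x^t. -/
/-!
Substituting `s = 1 / y` turns `((1 + y) ^ t - 1) / y ^ t` into the increment `(s + 1) ^ t - s ^ t`
of the concave function `s ↦ s ^ t`, which decreases in `s`. Hence the coefficient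
`((1 + y) ^ t - 1) / y ^ t` increases in `y`, and its value at `x ≤ k` is at most its value at `k`.
-/

open Real Set

theorem ConcaveOn.map_add_sub_map_le_of_le {s : Set ℝ} {f : ℝ → ℝ} (hf : ConcaveOn ℝ s f)
    {a b h : ℝ} (ha : a ∈ s) (hbh : b + h ∈ s) (hab : a ≤ b) (hh : 0 < h) :
    f (b + h) - f b ≤ f (a + h) - f a := by
  have hb : b ∈ s := hf.1.ordConnected.out ha hbh ⟨hab, by linarith⟩
  have hah : a + h ∈ s := hf.1.ordConnected.out ha hbh ⟨by linarith, by linarith⟩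
  -- the secant slopes of `f` on `[a, a + h]`, `[a, b + h]`, `[b, b + h]` decrease
  have h₁ := hf.neg.secant_mono ha hah hbh (by linarith) (by linarith) (by linarith : a + h ≤ b + h)
  have h₂ := hf.neg.secant_mono hbh ha hb (by linarith) (by linarith) hab
  rw [show a - (b + h) = -(b + h - a) by ring, show b - (b + h) = -h by ring, div_neg, div_neg] at h₂
  rw [add_sub_cancel_left] at h₁
  simp only [Pi.neg_apply, neg_sub_neg, ← neg_div, neg_sub] at h₁ h₂
  have key := (div_le_div_iff_of_pos_right hh).1 (h₁.trans h₂)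
  linarith

theorem Real.rpow_one_add_sub_one_div_rpow {y : ℝ} (hy : 0 < y) (t : ℝ) :
    ((1 + y) ^ t - 1) / y ^ t = (y⁻¹ + 1) ^ t - y⁻¹ ^ t := by
  rw [show y⁻¹ + 1 = (1 + y) / y by field_simp, div_rpow (by positivity) hy.le,
    inv_rpow hy.le, sub_div, one_div]

theorem Real.monotoneOn_rpow_one_add_sub_one_div_rpow {t : ℝ} (ht₀ : 0 ≤ t) (ht₁ : t ≤ 1) :
    MonotoneOn (fun y : ℝ ↦ ((1 + y) ^ t - 1) / y ^ t) (Ioi 0) := by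
  intro x (hx : 0 < x) k (hk : 0 < k) hxk
  simp only [rpow_one_add_sub_one_div_rpow hx, rpow_one_add_sub_one_div_rpow hk]
  exact (concaveOn_rpow ht₀ ht₁).map_add_sub_map_le_of_le (inv_pos.2 hk).le
    (by positivity : (0 : ℝ) ≤ x⁻¹ + 1) (inv_anti₀ hx hxk) one_pos

theorem stmt_2_general (x k t : ℝ) (hx : 0 ≤ x) (hxk : x ≤ k)
    (ht0 : 0 ≤ t) (ht1 : t ≤ 1) :
    (1 + x) ^ t ≤ 1 + ((1 + k) ^ t - 1) / k ^ t * x ^ t := by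
  rcases hx.eq_or_lt with rfl | hx
  · have hk : 0 ≤ ((1 + k) ^ t - 1) / k ^ t :=
      div_nonneg (sub_nonneg.2 (one_le_rpow (by linarith) ht0)) (rpow_nonneg hxk t)
    simpa using mul_nonneg hk (rpow_nonneg le_rfl t)
  have hcoeff := monotoneOn_rpow_one_add_sub_one_div_rpow ht0 ht1 hx (hx.trans_le hxk) hxk
  have hxt : 0 < x ^ t := rpow_pos_of_pos hx t
  rw [div_le_iff₀ hxt] at hcoeff
  linarith

theorem stmt_2 (x k t : ℝ) (hx : 0 ≤ x) (hxk : x ≤ k) (hk1 : k ≤ 1) (hk0 : 0 < k)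
    (ht0 : 0 ≤ t) (ht1 : t ≤ 1) :
    (1 + x) ^ t ≤ 1 + ((1 + k) ^ t - 1) / k ^ t * x ^ t :=
  stmt_2_general x k t hx hxk ht0 ht1
end

section
/- Let a, b ≥ 0 with b ≤ k·a for some 0 < k ≤ 1, and let β ≥ 2. Then (a² + b²)^{β/2} ≥ a^β + K_β · b^β, where K_β = ((1+k)^{β/2} - 1)/k^{β/2}. -/
open Real Set

lemma g_mono (p : ℝ) (hp : 1 ≤ p) :
    MonotoneOn (fun x : ℝ => (x + 1) ^ p - x ^ p) (Ici (0:ℝ)) := by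
  have hp0 : (0:ℝ) ≤ p := by linarith
  apply monotoneOn_of_deriv_nonneg (convex_Ici 0)
  · exact ((Real.continuous_rpow_const hp0).comp (continuous_add_right 1)).continuousOn.sub
      (Real.continuous_rpow_const hp0).continuousOn
  · intro x hx
    rw [interior_Ici] at hx
    have h1 : HasDerivAt (fun x : ℝ => (x + 1) ^ p - x ^ p)
        (1 * p * (x + 1) ^ (p - 1) - 1 * p * x ^ (p - 1)) x := (((hasDerivAt_id x).add_const 1).rpow_const (Or.inr hp)).sub
        ((hasDerivAt_id x).rpow_const (Or.inr hp))
    exact h1.differentiableAt.differentiableWithinAt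
  · intro x hx
    rw [interior_Ici] at hx
    have h1 : HasDerivAt (fun x : ℝ => (x + 1) ^ p - x ^ p)
        (1 * p * (x + 1) ^ (p - 1) - 1 * p * x ^ (p - 1)) x :=
      (((hasDerivAt_id x).add_const 1).rpow_const (Or.inr hp)).sub
        ((hasDerivAt_id x).rpow_const (Or.inr hp))
    rw [h1.deriv]
    have : x ^ (p-1) ≤ (x+1) ^ (p-1) :=
      Real.rpow_le_rpow hx.le (by linarith) (by linarith)
    nlinarith

-- key scalar inequality: for 0 < t ≤ k ≤ 1, ((1+t)^p - 1) * k^p ≥ ((1+k)^p - 1) * t^p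
lemma key (p t k : ℝ) (hp : 1 ≤ p) (ht : 0 < t) (htk : t ≤ k) (hk1 : k ≤ 1) :
    ((1 + k) ^ p - 1) / k ^ p * t ^ p ≤ (1 + t) ^ p - 1 := by
  have hk0 : 0 < k := lt_of_lt_of_le ht htk
  have hinv : 1/k ≤ 1/t := by
    apply one_div_le_one_div_of_le ht htk
  have hg := g_mono p hp (mem_Ici.mpr (by positivity : (0:ℝ) ≤ 1/k))
      (mem_Ici.mpr (by positivity : (0:ℝ) ≤ 1/t)) hinv
  simp only at hg
  -- hg : (1/k + 1)^p - (1/k)^p ≤ (1/t + 1)^p - (1/t)^p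
  have e1 : (1/k + 1) = (1 + k)/k := by field_simp
  have e2 : (1/t + 1) = (1 + t)/t := by field_simp
  rw [e1, e2, Real.div_rpow (by linarith) hk0.le, Real.div_rpow (by linarith) ht.le,
    Real.div_rpow zero_le_one hk0.le, Real.div_rpow zero_le_one ht.le,
    Real.one_rpow] at hg
  have hkp : 0 < k ^ p := Real.rpow_pos_of_pos hk0 p
  have htp : 0 < t ^ p := Real.rpow_pos_of_pos ht p
  rw [← sub_div, ← sub_div, div_le_div_iff₀ hkp htp] at hg
  rw [div_mul_eq_mul_div, div_le_iff₀ hkp]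
  nlinarith

theorem stmt_7 (a b k β : ℝ) (ha : 0 ≤ a) (hb : 0 ≤ b) (hk0 : 0 < k) (hk1 : k ≤ 1)
    (hba : b ≤ k * a) (hβ : 2 ≤ β) :
    (a ^ (2 : ℝ) + b ^ (2 : ℝ)) ^ (β / 2) ≥
      a ^ β + ((1 + k) ^ (β / 2) - 1) / k ^ (β / 2) * b ^ β := by
  set p := β / 2 with hpdef
  have hp : 1 ≤ p := by rw [hpdef]; linarith
  have hβ0 : 0 < β := by linarith
  rcases eq_or_lt_of_le hb with hb0 | hbpos
  · -- b = 0
    rw [← hb0]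
    rw [Real.zero_rpow (by norm_num : (2:ℝ) ≠ 0), Real.zero_rpow (ne_of_gt hβ0)]
    rw [add_zero, mul_zero, add_zero, ← Real.rpow_mul ha]
    rw [show (2:ℝ) * p = β by rw [hpdef]; ring]
  · have hapos : 0 < a := by
      by_contra h
      push_neg at h
      have : a = 0 := le_antisymm h ha
      rw [this, mul_zero] at hba
      linarith
    set t := (b/a)^(2:ℝ) with htdef
    have htpos : 0 < t := Real.rpow_pos_of_pos (div_pos hbpos hapos) 2
    have htk : t ≤ k := by
      have h1 : b/a ≤ k := (div_le_iff₀ hapos).mpr (by linarith [hba])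
      have h2 : t ≤ k ^ (2:ℝ) := Real.rpow_le_rpow (by positivity) h1 (by norm_num)
      have h3 : k ^ (2:ℝ) ≤ k := by
        calc k ^ (2:ℝ) = k * k := by
              rw [show (2:ℝ) = ((2:ℕ):ℝ) by norm_num, Real.rpow_natCast]; ring
          _ ≤ 1 * k := by nlinarith
          _ = k := one_mul k
      linarith
    have hkey := key p t k hp htpos htk hk1
    -- a^2 + b^2 = a^2 * (1 + t)
    have ht_eq : b ^ (2:ℝ) = a ^ (2:ℝ) * t := by
      rw [htdef, Real.div_rpow hb ha, mul_div_cancel₀]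
      exact ne_of_gt (Real.rpow_pos_of_pos hapos 2)
    have ha2 : (0:ℝ) < a ^ (2:ℝ) := Real.rpow_pos_of_pos hapos 2
    have hLHS : (a ^ (2:ℝ) + b ^ (2:ℝ)) ^ p = a ^ β * (1 + t) ^ p := by
      rw [ht_eq, ← mul_one_add, Real.mul_rpow ha2.le (by linarith),
        ← Real.rpow_mul ha, show (2:ℝ) * p = β by rw [hpdef]; ring]
    have hbβ : b ^ β = a ^ β * t ^ p := by
      have : b ^ β = (b ^ (2:ℝ)) ^ p := by
        rw [← Real.rpow_mul hb, show (2:ℝ) * p = β by rw [hpdef]; ring]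
      rw [this, ht_eq, Real.mul_rpow ha2.le htpos.le, ← Real.rpow_mul ha,
        show (2:ℝ) * p = β by rw [hpdef]; ring]
    rw [ge_iff_le, hLHS, hbβ]
    have haβ : 0 < a ^ β := Real.rpow_pos_of_pos hapos β
    calc a ^ β + ((1 + k) ^ p - 1) / k ^ p * (a ^ β * t ^ p)
        = a ^ β * (1 + ((1 + k) ^ p - 1) / k ^ p * t ^ p) := by ring
      _ ≤ a ^ β * (1 + ((1 + t) ^ p - 1)) := by
          apply mul_le_mul_of_nonneg_left _ haβ.le
          linarith
      _ = a ^ β * (1 + t) ^ p := by ring_nf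
end

section
/- Let a, b ≥ 0 with b ≥ k·a for some k ≥ 1, let μ ≥ 2 and 0 ≤ γ ≤ μ. Then (a^μ + b^μ)^{γ/μ} ≥ a^γ + K_γ · b^γ, where K_γ = ((1+k)^{γ/μ} - 1)/k^{γ/μ}. -/
open Real Set

private lemma phi_antitone {t : ℝ} (ht0 : 0 ≤ t) (ht1 : t ≤ 1) :
    AntitoneOn (fun s : ℝ => (1 + s) ^ t - s ^ t) (Set.Ici 0) := by
  apply antitoneOn_of_deriv_nonpos (convex_Ici 0)
  · apply ContinuousOn.sub
    · apply ContinuousOn.rpow_const (by fun_prop)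
      intro x hx
      left
      simp only [mem_Ici] at hx
      positivity
    · apply ContinuousOn.rpow_const continuousOn_id
      intro x hx
      right; exact ht0
  · intro x hx
    rw [interior_Ici] at hx
    simp only [mem_Ioi] at hx
    have h1 : HasDerivAt (fun s : ℝ => (1 + s) ^ t - s ^ t)
        (1 * t * (1 + x) ^ (t - 1) - 1 * t * x ^ (t - 1)) x := by
      exact (((hasDerivAt_id x).const_add 1).rpow_const (Or.inl (by positivity))).sub
        ((hasDerivAt_id x).rpow_const (Or.inl hx.ne'))
    exact h1.differentiableAt.differentiableWithinAt
  · intro x hx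
    rw [interior_Ici] at hx
    simp only [mem_Ioi] at hx
    have h1 : HasDerivAt (fun s : ℝ => (1 + s) ^ t - s ^ t)
        (1 * t * (1 + x) ^ (t - 1) - 1 * t * x ^ (t - 1)) x := by
      exact (((hasDerivAt_id x).const_add 1).rpow_const (Or.inl (by positivity))).sub
        ((hasDerivAt_id x).rpow_const (Or.inl hx.ne'))
    rw [h1.deriv]
    have h2 : (1 + x) ^ (t - 1) ≤ x ^ (t - 1) :=
      Real.rpow_le_rpow_of_nonpos hx (by linarith) (by linarith)
    nlinarith

private lemma key_ineq {t k A B : ℝ} (ht0 : 0 ≤ t) (ht1 : t ≤ 1) (hk : 1 ≤ k)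
    (hA : 0 ≤ A) (hB : 0 ≤ B) (hkA : k * A ≤ B) :
    A ^ t + ((1 + k) ^ t - 1) / k ^ t * B ^ t ≤ (A + B) ^ t := by
  have hk0 : (0 : ℝ) < k := lt_of_lt_of_le one_pos hk
  rcases eq_or_lt_of_le hB with hB0 | hB0
  · have hA0 : A = 0 := by nlinarith
    subst hA0
    rw [← hB0]
    rcases eq_or_lt_of_le ht0 with ht | ht
    · simp [← ht]
    · rw [zero_add, Real.zero_rpow ht.ne']
      simp
  · -- B > 0; set s = A / B ≤ 1 / k
    set s : ℝ := A / B with hs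
    have hs0 : 0 ≤ s := div_nonneg hA hB
    have hsk : s ≤ 1 / k := by
      rw [div_le_div_iff₀ hB0 hk0]
      linarith [hkA]
    have hmono := phi_antitone ht0 ht1 hs0 (mem_Ici.mpr (by positivity)) hsk
    -- hmono : (1 + 1/k)^t - (1/k)^t ≤ (1 + s)^t - s^t
    have hBt : (0 : ℝ) < B ^ t := Real.rpow_pos_of_pos hB0 _
    have e1 : (1 + s) ^ t * B ^ t = (A + B) ^ t := by
      rw [← Real.mul_rpow (by positivity) hB]
      congr 1
      field_simp [hs]
      rw [hs, add_mul, one_mul, div_mul_cancel₀ A hB0.ne']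
      ring
    have e2 : s ^ t * B ^ t = A ^ t := by
      rw [← Real.mul_rpow hs0 hB]
      congr 1
      field_simp [hs]
      rw [hs, div_mul_cancel₀ A hB0.ne']
    have e3 : ((1 + 1 / k) ^ t - (1 / k) ^ t) = ((1 + k) ^ t - 1) / k ^ t := by
      have h1 : (1 + 1 / k : ℝ) = (1 + k) / k := by field_simp; ring
      rw [h1, Real.div_rpow (by positivity) hk0.le, Real.div_rpow (by norm_num) hk0.le,
        Real.one_rpow]
      ring
    have h := mul_le_mul_of_nonneg_right hmono hBt.le
    simp only at h
    calc A ^ t + ((1 + k) ^ t - 1) / k ^ t * B ^ t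
        = s ^ t * B ^ t + ((1 + 1 / k) ^ t - (1 / k) ^ t) * B ^ t := by rw [e2, e3]
      _ ≤ s ^ t * B ^ t + ((1 + s) ^ t - s ^ t) * B ^ t := by nlinarith
      _ = (1 + s) ^ t * B ^ t := by ring
      _ = (A + B) ^ t := e1

theorem stmt_8 (a b k μ γ : ℝ) (ha : 0 ≤ a) (hb : 0 ≤ b) (hk : 1 ≤ k)
    (hμ : 2 ≤ μ) (hγ0 : 0 ≤ γ) (hγμ : γ ≤ μ)
    (hba : b ^ μ ≥ k * a ^ μ) :
    (a ^ μ + b ^ μ) ^ (γ / μ) ≥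
      a ^ γ + ((1 + k) ^ (γ / μ) - 1) / k ^ (γ / μ) * b ^ γ := by
  have hμ0 : (0 : ℝ) < μ := by linarith
  set t : ℝ := γ / μ with hts
  have ht0 : 0 ≤ t := div_nonneg hγ0 hμ0.le
  have ht1 : t ≤ 1 := (div_le_one hμ0).mpr hγμ
  have ea : a ^ γ = (a ^ μ) ^ t := by
    rw [← Real.rpow_mul ha]
    congr 1
    field_simp [hts]
    rw [hts]; field_simp
  have eb : b ^ γ = (b ^ μ) ^ t := by
    rw [← Real.rpow_mul hb]
    congr 1
    field_simp [hts]
    rw [hts]; field_simp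
  rw [ea, eb]
  exact key_ineq ht0 ht1 hk (Real.rpow_nonneg ha μ) (Real.rpow_nonneg hb μ) hba
end

section
/- Let a, b ≥ 0 with b ≤ k·a for some 0 < k ≤ 1, and let 0 < μ ≤ 1. Then (a + b)^μ ≤ a^μ + K_μ · b^μ, where K_μ = ((1+k)^μ - 1)/k^μ. -/
open Real Set

private lemma g_deriv (μ : ℝ) (hμ0 : 0 < μ) (hμ1 : μ ≤ 1) {x : ℝ} (hx : 0 < x) :
    HasDerivAt (fun y : ℝ => ((1 + y) ^ μ - 1) / y ^ μ)
      ((1 * μ * (1 + x) ^ (μ - 1) * x ^ μ -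
        ((1 + x) ^ μ - 1) * (μ * x ^ (μ - 1))) / (x ^ μ) ^ 2) x := by
  have h1x : (0:ℝ) < 1 + x := by linarith
  have hN : HasDerivAt (fun y : ℝ => (1 + y) ^ μ - 1) (1 * μ * (1 + x) ^ (μ - 1)) x := by
    have : HasDerivAt (fun y : ℝ => 1 + y) 1 x := (hasDerivAt_id x).const_add 1
    exact (this.rpow_const (Or.inl h1x.ne')).sub_const 1
  have hD : HasDerivAt (fun y : ℝ => y ^ μ) (μ * x ^ (μ - 1)) x :=
    Real.hasDerivAt_rpow_const (Or.inl hx.ne')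
  exact hN.div hD (by positivity)

private lemma g_mono_s9 (μ : ℝ) (hμ0 : 0 < μ) (hμ1 : μ ≤ 1) :
    MonotoneOn (fun x : ℝ => ((1 + x) ^ μ - 1) / x ^ μ) (Set.Ioi 0) := by
  have hint : interior (Set.Ioi (0:ℝ)) = Set.Ioi 0 := interior_Ioi
  apply monotoneOn_of_deriv_nonneg (convex_Ioi 0)
  · apply ContinuousOn.div
    · exact ((continuousOn_const.add continuousOn_id).rpow_const
        (fun x hx => Or.inl (by simp at hx; show (1:ℝ) + x ≠ 0; positivity))).sub continuousOn_const
    · exact continuousOn_id.rpow_const (fun x hx => Or.inl (by simp at hx; positivity))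
    · intro x hx
      simp only [Set.mem_Ioi] at hx
      positivity
  · rw [hint]
    intro x hx
    exact (g_deriv μ hμ0 hμ1 hx).differentiableAt.differentiableWithinAt
  · rw [hint]
    intro x hx
    simp only [Set.mem_Ioi] at hx
    rw [(g_deriv μ hμ0 hμ1 hx).deriv]
    have h1x : (0:ℝ) < 1 + x := by linarith
    apply div_nonneg _ (by positivity)
    have hxμ : x ^ μ = x ^ (μ - 1) * x := by
      rw [← Real.rpow_add_one hx.ne']; ring_nf
    have h1xμ : (1 + x) ^ μ = (1 + x) ^ (μ - 1) * (1 + x) := by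
      rw [← Real.rpow_add_one h1x.ne']; ring_nf
    have hle : (1 + x) ^ (μ - 1) ≤ 1 :=
      Real.rpow_le_one_of_one_le_of_nonpos (by linarith) (by linarith)
    have key : 1 * μ * (1 + x) ^ (μ - 1) * x ^ μ - ((1 + x) ^ μ - 1) * (μ * x ^ (μ - 1))
        = μ * x ^ (μ - 1) * (1 - (1 + x) ^ (μ - 1)) := by
      rw [hxμ, h1xμ]; ring
    rw [key]
    have hxp : (0:ℝ) ≤ x ^ (μ - 1) := Real.rpow_nonneg hx.le _
    exact mul_nonneg (mul_nonneg hμ0.le hxp) (by linarith)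

theorem stmt_9 (a b k μ : ℝ) (ha : 0 ≤ a) (hb : 0 ≤ b) (hk0 : 0 < k) (hk1 : k ≤ 1)
    (hba : b ≤ k * a) (hμ0 : 0 < μ) (hμ1 : μ ≤ 1) :
    (a + b) ^ μ ≤ a ^ μ + ((1 + k) ^ μ - 1) / k ^ μ * b ^ μ := by
  have hK : 0 ≤ ((1 + k) ^ μ - 1) / k ^ μ := by
    apply div_nonneg _ (Real.rpow_nonneg hk0.le _)
    have h1 : (1:ℝ) ^ μ ≤ (1 + k) ^ μ :=
      Real.rpow_le_rpow (by norm_num) (by linarith) hμ0.le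
    rw [Real.one_rpow] at h1
    linarith
  rcases eq_or_lt_of_le ha with rfl | ha0
  · have hb0 : b = 0 := le_antisymm (by simpa using hba) hb
    subst hb0
    simp [Real.zero_rpow hμ0.ne']
  rcases eq_or_lt_of_le hb with rfl | hb0
  · simp [Real.zero_rpow hμ0.ne']
  set t := b / a with ht
  have ht0 : 0 < t := div_pos hb0 ha0
  have htk : t ≤ k := (div_le_iff₀ ha0).mpr (by linarith [hba])
  have hg := g_mono_s9 μ hμ0 hμ1 (Set.mem_Ioi.mpr ht0) (Set.mem_Ioi.mpr hk0) htk
  simp only at hg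
  have hkey : (1 + t) ^ μ - 1 ≤ ((1 + k) ^ μ - 1) / k ^ μ * t ^ μ := by
    have := (div_le_iff₀ (Real.rpow_pos_of_pos ht0 μ)).mp hg
    linarith
  have hab : a + b = a * (1 + t) := by rw [ht]; field_simp
  have habμ : (a + b) ^ μ = a ^ μ * (1 + t) ^ μ := by
    rw [hab, Real.mul_rpow ha0.le (by linarith)]
  have hbt : a ^ μ * t ^ μ = b ^ μ := by
    rw [← Real.mul_rpow ha0.le ht0.le, ht, mul_div_cancel₀ b ha0.ne']
  calc (a + b) ^ μ = a ^ μ * (1 + t) ^ μ := habμ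
    _ ≤ a ^ μ * (1 + ((1 + k) ^ μ - 1) / k ^ μ * t ^ μ) := by
        apply mul_le_mul_of_nonneg_left _ (Real.rpow_nonneg ha0.le μ)
        linarith
    _ = a ^ μ + ((1 + k) ^ μ - 1) / k ^ μ * (a ^ μ * t ^ μ) := by ring
    _ = a ^ μ + ((1 + k) ^ μ - 1) / k ^ μ * b ^ μ := by rw [hbt]
end

section
/- Let r ≥ 1 and let x₀, x₁, …, x_{r-1} be nonnegative reals satisfying k · x_l ≥ Σ_{j=l+1}^{r-1} x_j for all l = 0, …, r-2, where 0 < k ≤ 1. Then for any t ≥ 1, (Σ_{j=0}^{r-1} x_j)^t ≥ Σ_{j=0}^{r-1} K^j · x_j^t, where K = ((1+k)^t - 1)/k^t. -/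
lemma monoDiff (t c : ℝ) (ht : 1 ≤ t) (hc : 0 ≤ c) :
    MonotoneOn (fun x : ℝ => (x + c) ^ t - x ^ t) (Set.Ici 0) := by
  have hd : ∀ x : ℝ, HasDerivAt (fun y : ℝ => (y + c) ^ t - y ^ t)
      (t * (x + c) ^ (t - 1) - t * x ^ (t - 1)) x := by
    intro x
    have h1 : HasDerivAt (fun y : ℝ => (y + c) ^ t) (t * (x + c) ^ (t - 1) * 1) x := by
      have h0 := Real.hasDerivAt_rpow_const (p := t) (x := x + c) (Or.inr ht)
      exact h0.comp x ((hasDerivAt_id x).add_const c)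
    have h2 := Real.hasDerivAt_rpow_const (p := t) (x := x) (Or.inr ht)
    have h3 := h1.sub h2
    rw [mul_one] at h3
    exact h3
  apply monotoneOn_of_deriv_nonneg (convex_Ici 0)
  · exact (Differentiable.continuous (fun x => (hd x).differentiableAt)).continuousOn
  · exact fun x _ => (hd x).differentiableAt.differentiableWithinAt
  · intro y hy
    rw [(hd y).deriv]
    have hy0 : (0:ℝ) ≤ y := le_of_lt (by simpa using hy)
    have := Real.rpow_le_rpow hy0 (by linarith : y ≤ y + c) (by linarith : (0:ℝ) ≤ t - 1)
    nlinarith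

lemma keyB (t k u : ℝ) (ht : 1 ≤ t) (hu : 0 < u) (huk : u ≤ k) :
    ((1 + k) ^ t - 1) * u ^ t ≤ ((1 + u) ^ t - 1) * k ^ t := by
  have hk : 0 < k := lt_of_lt_of_le hu huk
  have hc : (0:ℝ) ≤ u * k := by positivity
  have h := monoDiff t (u * k) ht hc (Set.mem_Ici.2 hu.le) (Set.mem_Ici.2 hk.le) huk
  simp only at h
  have e1 : u + u * k = u * (1 + k) := by ring
  have e2 : k + u * k = k * (1 + u) := by ring
  rw [e1, e2, Real.mul_rpow hu.le (by positivity), Real.mul_rpow hk.le (by positivity)] at h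
  nlinarith [h]

lemma keyC (t k a b : ℝ) (ht : 1 ≤ t) (hk : 0 < k) (ha : 0 ≤ a) (hb : 0 ≤ b)
    (hba : b ≤ k * a) :
    a ^ t + ((1 + k) ^ t - 1) / k ^ t * b ^ t ≤ (a + b) ^ t := by
  have ht0 : t ≠ 0 := by linarith
  rcases hb.eq_or_lt with h0 | hb'
  · rw [← h0, Real.zero_rpow ht0, add_zero, mul_zero, add_zero]
  · have ha' : 0 < a := by nlinarith
    set u := b / a with hudef
    have hu : 0 < u := div_pos hb' ha'
    have huk : u ≤ k := by rw [hudef, div_le_iff₀ ha']; nlinarith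
    have hB := keyB t k u ht hu huk
    have hkt : 0 < k ^ t := Real.rpow_pos_of_pos hk t
    have hat : 0 < a ^ t := Real.rpow_pos_of_pos ha' t
    have hub : b = u * a := by rw [hudef]; field_simp
    have e : (a + b) ^ t = (1 + u) ^ t * a ^ t := by
      rw [hub, show a + u * a = (1 + u) * a by ring,
        Real.mul_rpow (by positivity) ha'.le]
    have ebt : b ^ t = u ^ t * a ^ t := by rw [hub, Real.mul_rpow hu.le ha'.le]
    have key : ((1 + k) ^ t - 1) / k ^ t * u ^ t ≤ (1 + u) ^ t - 1 := by
      rw [div_mul_eq_mul_div, div_le_iff₀ hkt]; exact hB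
    rw [e, ebt]
    nlinarith [mul_le_mul_of_nonneg_right key hat.le]

lemma mainAux (r : ℕ) (x : ℕ → ℝ) (hx : ∀ j, 0 ≤ x j)
    (k : ℝ) (hk0 : 0 < k)
    (hcond : ∀ l, l ≤ r - 2 → k * x l ≥ ∑ j ∈ Finset.Ico (l + 1) r, x j)
    (t : ℝ) (ht : 1 ≤ t) :
    ∀ m l, l + m = r →
      ∑ j ∈ Finset.Ico l r, (((1 + k) ^ t - 1) / k ^ t) ^ (j - l) * x j ^ t ≤
        (∑ j ∈ Finset.Ico l r, x j) ^ t := by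
  set K : ℝ := ((1 + k) ^ t - 1) / k ^ t with hK
  have hK0 : 0 ≤ K := by
    apply div_nonneg _ (Real.rpow_nonneg hk0.le t)
    have : (1:ℝ) ^ t ≤ (1 + k) ^ t :=
      Real.rpow_le_rpow (by norm_num) (by linarith) (by linarith)
    rw [Real.one_rpow] at this; linarith
  intro m
  induction m with
  | zero =>
    intro l hl
    have : l = r := by omega
    subst this
    simp [Real.zero_rpow (show t ≠ 0 by linarith)]
  | succ m ih =>
    intro l hl
    have hlr : l < r := by omega
    rw [Finset.sum_eq_sum_Ico_succ_bot hlr x,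
      Finset.sum_eq_sum_Ico_succ_bot hlr (fun j => K ^ (j - l) * x j ^ t)]
    set S : ℝ := ∑ j ∈ Finset.Ico (l + 1) r, x j with hS
    have hS0 : 0 ≤ S := Finset.sum_nonneg (fun j _ => hx j)
    have hSk : S ≤ k * x l := by
      rcases Nat.lt_or_ge (l + 1) r with h | h
      · exact hcond l (by omega)
      · have : Finset.Ico (l + 1) r = ∅ := Finset.Ico_eq_empty (by omega)
        rw [hS, this, Finset.sum_empty]
        exact mul_nonneg hk0.le (hx l)
    have hih := ih (l + 1) (by omega)
    have hC := keyC t k (x l) S ht hk0 (hx l) hS0 hSk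
    have hmul : K * (∑ j ∈ Finset.Ico (l + 1) r, K ^ (j - (l + 1)) * x j ^ t) ≤ K * S ^ t :=
      mul_le_mul_of_nonneg_left hih hK0
    rw [Finset.mul_sum] at hmul
    have hrw : ∀ j ∈ Finset.Ico (l + 1) r,
        K ^ (j - l) * x j ^ t = K * (K ^ (j - (l + 1)) * x j ^ t) := by
      intro j hj
      rw [Finset.mem_Ico] at hj
      rw [← mul_assoc, ← pow_succ']
      congr 2
      omega
    rw [Finset.sum_congr rfl hrw]
    calc K ^ (l - l) * x l ^ t + ∑ j ∈ Finset.Ico (l + 1) r, K * (K ^ (j - (l + 1)) * x j ^ t)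
        ≤ x l ^ t + K * S ^ t := by
          simp only [Nat.sub_self, pow_zero, one_mul]
          linarith [hmul]
      _ ≤ (x l + S) ^ t := hC

theorem stmt_10 (r : ℕ) (hr : 1 ≤ r) (x : ℕ → ℝ) (hx : ∀ j, 0 ≤ x j)
    (k : ℝ) (hk0 : 0 < k) (hk1 : k ≤ 1)
    (hcond : ∀ l, l ≤ r - 2 → k * x l ≥ ∑ j ∈ Finset.Ico (l + 1) r, x j)
    (t : ℝ) (ht : 1 ≤ t) :
    (∑ j ∈ Finset.range r, x j) ^ t ≥
      ∑ j ∈ Finset.range r, (((1 + k) ^ t - 1) / k ^ t) ^ j * (x j) ^ t := by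
  have h := mainAux r x hx k hk0 hcond t ht r 0 (by omega)
  simp only [Nat.sub_zero] at h
  rw [ge_iff_le, Finset.range_eq_Ico]
  exact h
end

section
/- Let r ≥ 1 and let x₀, x₁, …, x_{r-1} be nonnegative reals satisfying k · x_j ≥ x_{j+1} for all j = 0, …, r-2, where 0 < k ≤ 1. Then for any t ≥ 1, (Σ_{j=0}^{r-1} x_j)^t ≥ Σ_{j=0}^{r-1} K^{ω_H(j)} · x_j^t, where K = ((1+k)^t - 1)/k^t and ω_H(j) is the Hamming weight of j (the number of 1s in the binary expansion of j). -/
/-- The Hamming weight of a natural number: the number of 1s in its binary expansion. -/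
def hammingWeight (n : ℕ) : ℕ := (Nat.bits n).count true

lemma hw_even (j : ℕ) : hammingWeight (2 * j) = hammingWeight j := by
  rcases Nat.eq_zero_or_pos j with h | h
  · simp [h, hammingWeight]
  · unfold hammingWeight
    rw [Nat.bit0_bits j h.ne']
    simp

lemma hw_odd (j : ℕ) : hammingWeight (2 * j + 1) = hammingWeight j + 1 := by
  unfold hammingWeight
  rw [Nat.bit1_bits]
  simp

lemma g_mono_s11 (t : ℝ) (ht : 1 ≤ t) :
    MonotoneOn (fun u : ℝ => (u + 1) ^ t - u ^ t) (Set.Ici 0) := by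
  have hd : ∀ u : ℝ, HasDerivAt (fun u : ℝ => (u + 1) ^ t - u ^ t)
      (t * (u + 1) ^ (t - 1) * 1 - t * u ^ (t - 1)) u := by
    intro u
    exact ((Real.hasDerivAt_rpow_const (Or.inr ht)).comp u
      ((hasDerivAt_id u).add_const 1)).sub (Real.hasDerivAt_rpow_const (Or.inr ht))
  apply monotoneOn_of_deriv_nonneg (convex_Ici 0)
  · exact (Differentiable.continuous (fun u => (hd u).differentiableAt)).continuousOn
  · exact fun u _ => ((hd u).differentiableAt).differentiableWithinAt
  · intro u hu
    rw [interior_Ici] at hu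
    rw [(hd u).deriv]
    have h1 : u ^ (t - 1) ≤ (u + 1) ^ (t - 1) :=
      Real.rpow_le_rpow (le_of_lt hu) (by linarith) (by linarith)
    nlinarith [h1, ht]

lemma key_s11 (k t a b : ℝ) (hk0 : 0 < k) (ht : 1 ≤ t)
    (ha : 0 ≤ a) (hb : 0 ≤ b) (hba : b ≤ k * a) :
    a ^ t + ((1 + k) ^ t - 1) / k ^ t * b ^ t ≤ (a + b) ^ t := by
  rcases eq_or_lt_of_le hb with h | h
  · rw [← h, Real.zero_rpow (by linarith : t ≠ 0)]
    simp
  · have ha' : 0 < a := by nlinarith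
    have hK : ((1 + k) ^ t - 1) / k ^ t = (1 / k + 1) ^ t - (1 / k) ^ t := by
      have h1 : (1 / k + 1 : ℝ) = (1 + k) / k := by field_simp
      rw [h1, Real.div_rpow (by linarith) hk0.le, Real.div_rpow zero_le_one hk0.le,
        Real.one_rpow]
      ring
    have hab : 1 / k ≤ a / b := by
      rw [div_le_div_iff₀ hk0 h]
      nlinarith
    have hmono := g_mono_s11 t ht (Set.mem_Ici.mpr (by positivity)) (Set.mem_Ici.mpr
      (by positivity : (0:ℝ) ≤ a / b)) hab
    simp only at hmono
    have hbt : 0 < b ^ t := Real.rpow_pos_of_pos h t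
    have e1 : (a + b) ^ t = b ^ t * (a / b + 1) ^ t := by
      rw [← Real.mul_rpow h.le (by positivity)]
      congr 1
      field_simp
    have e2 : a ^ t = b ^ t * (a / b) ^ t := by
      rw [← Real.mul_rpow h.le (by positivity)]
      congr 1
      field_simp
    rw [hK, e1, e2]
    nlinarith [hmono, hbt]

lemma sum_pair (m : ℕ) (f : ℕ → ℝ) :
    ∑ j ∈ Finset.range (2 * m), f j = ∑ j ∈ Finset.range m, (f (2 * j) + f (2 * j + 1)) := by
  induction m with
  | zero => simp
  | succ n ih =>
    rw [Nat.mul_succ, Finset.sum_range_succ, Finset.sum_range_succ, Finset.sum_range_succ, ih,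
      add_assoc]

lemma main_lemma (k t : ℝ) (hk0 : 0 < k) (hk1 : k ≤ 1) (ht : 1 ≤ t) :
    ∀ n : ℕ, ∀ x : ℕ → ℝ, (∀ j, 0 ≤ x j) → (∀ j, x (j + 1) ≤ k * x j) →
      ∑ j ∈ Finset.range (2 ^ n), (((1 + k) ^ t - 1) / k ^ t) ^ hammingWeight j * x j ^ t ≤
        (∑ j ∈ Finset.range (2 ^ n), x j) ^ t := by
  have hK0 : 0 ≤ ((1 + k) ^ t - 1) / k ^ t := by
    have : (1 : ℝ) ≤ (1 + k) ^ t := by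
      calc (1 : ℝ) = 1 ^ t := (Real.one_rpow t).symm
      _ ≤ (1 + k) ^ t := Real.rpow_le_rpow zero_le_one (by linarith) (by linarith)
    have hkt : 0 < k ^ t := Real.rpow_pos_of_pos hk0 t
    apply div_nonneg (by linarith) hkt.le
  intro n
  induction n with
  | zero =>
    intro x hx0 _
    simp [hammingWeight]
  | succ n ih =>
    intro x hx0 hx1
    set K := ((1 + k) ^ t - 1) / k ^ t with hKdef
    set y : ℕ → ℝ := fun j => x (2 * j) + x (2 * j + 1) with hy
    have hy0 : ∀ j, 0 ≤ y j := fun j => add_nonneg (hx0 _) (hx0 _)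
    have hy1 : ∀ j, y (j + 1) ≤ k * y j := by
      intro j
      have h1 := hx1 (2 * j)
      have h2 := hx1 (2 * j + 1)
      have h3 := hx1 (2 * j + 2)
      have e1 : 2 * (j + 1) = 2 * j + 1 + 1 := by ring
      have e2 : 2 * (j + 1) + 1 = 2 * j + 2 + 1 := by ring
      simp only [hy, e1, e2]
      nlinarith [hx0 (2 * j), hx0 (2 * j + 1), hx0 (2 * j + 2)]
    have hpow : 2 ^ (n + 1) = 2 * 2 ^ n := by ring
    rw [hpow, sum_pair, sum_pair]
    calc ∑ j ∈ Finset.range (2 ^ n),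
          (K ^ hammingWeight (2 * j) * x (2 * j) ^ t +
            K ^ hammingWeight (2 * j + 1) * x (2 * j + 1) ^ t)
        = ∑ j ∈ Finset.range (2 ^ n),
          K ^ hammingWeight j * (x (2 * j) ^ t + K * x (2 * j + 1) ^ t) := by
          apply Finset.sum_congr rfl
          intro j _
          rw [hw_even, hw_odd, pow_succ]
          ring
      _ ≤ ∑ j ∈ Finset.range (2 ^ n), K ^ hammingWeight j * y j ^ t := by
          apply Finset.sum_le_sum
          intro j _
          apply mul_le_mul_of_nonneg_left _ (pow_nonneg hK0 _)
          exact key_s11 k t (x (2 * j)) (x (2 * j + 1)) hk0 ht (hx0 _) (hx0 _) (hx1 _)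
      _ ≤ (∑ j ∈ Finset.range (2 ^ n), y j) ^ t := ih y hy0 hy1

theorem stmt_11 (r : ℕ) (hr : 1 ≤ r) (x : ℕ → ℝ) (hx : ∀ j, 0 ≤ x j)
    (k : ℝ) (hk0 : 0 < k) (hk1 : k ≤ 1)
    (hcond : ∀ j, j ≤ r - 2 → k * x j ≥ x (j + 1))
    (t : ℝ) (ht : 1 ≤ t) :
    (∑ j ∈ Finset.range r, x j) ^ t ≥
      ∑ j ∈ Finset.range r, (((1 + k) ^ t - 1) / k ^ t) ^ hammingWeight j * (x j) ^ t := by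
  set x' : ℕ → ℝ := fun j => if j < r then x j else 0 with hx'
  have hx'0 : ∀ j, 0 ≤ x' j := by
    intro j
    simp only [hx']
    split
    · exact hx j
    · exact le_refl 0
  have hx'1 : ∀ j, x' (j + 1) ≤ k * x' j := by
    intro j
    by_cases h : j + 1 < r
    · have hj : j < r := by omega
      have hj2 : j ≤ r - 2 := by omega
      simp only [hx', if_pos h, if_pos hj]
      exact hcond j hj2
    · simp only [hx', if_neg h]
      exact mul_nonneg hk0.le (hx'0 j)
  obtain ⟨n, hn⟩ : ∃ n, r ≤ 2 ^ n := ⟨r, (Nat.lt_two_pow_self (n := r)).le⟩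
  have hsub : Finset.range r ⊆ Finset.range (2 ^ n) := Finset.range_subset_range.mpr hn
  have hsum1 : ∑ j ∈ Finset.range (2 ^ n), x' j = ∑ j ∈ Finset.range r, x j := by
    rw [← Finset.sum_subset hsub]
    · exact Finset.sum_congr rfl fun j hj =>
        by simp [hx', Finset.mem_range.mp hj]
    · intro j _ hj
      have : ¬ j < r := fun h => hj (Finset.mem_range.mpr h)
      simp [hx', this]
  have hsum2 : ∑ j ∈ Finset.range (2 ^ n),
      (((1 + k) ^ t - 1) / k ^ t) ^ hammingWeight j * x' j ^ t =
      ∑ j ∈ Finset.range r, (((1 + k) ^ t - 1) / k ^ t) ^ hammingWeight j * x j ^ t := by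
    rw [← Finset.sum_subset hsub]
    · exact Finset.sum_congr rfl fun j hj =>
        by simp [hx', Finset.mem_range.mp hj]
    · intro j _ hj
      have : ¬ j < r := fun h => hj (Finset.mem_range.mpr h)
      simp [hx', this, Real.zero_rpow (by linarith : t ≠ 0)]
  have := main_lemma k t hk0 hk1 ht n x' hx'0 hx'1
  rw [hsum1, hsum2] at this
  exact this
end

section
/- Let r ≥ 1 and let x₀, x₁, …, x_{r-1} be nonnegative reals satisfying k · x_j ≥ x_{j+1} for all j = 0, …, r-2, where 0 < k ≤ 1. Then for any μ with 0 < μ ≤ 1, (Σ_{j=0}^{r-1} x_j)^μ ≤ Σ_{j=0}^{r-1} K^{ω_H(j)} · x_j^μ, where K = ((1+k)^μ - 1)/k^μ and ω_H(j) is the Hamming weight of j. -/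
lemma hw_two_mul (i : ℕ) : hammingWeight (2 * i) = hammingWeight i := by
  rcases Nat.eq_zero_or_pos i with rfl | hi
  · rfl
  · simp [hammingWeight, Nat.bit0_bits i hi.ne']

lemma hw_two_mul_add_one (i : ℕ) : hammingWeight (2 * i + 1) = hammingWeight i + 1 := by
  simp [hammingWeight, Nat.bit1_bits i]

lemma shift_ineq {μ : ℝ} (hμ0 : 0 < μ) (hμ1 : μ ≤ 1) {t s u : ℝ}
    (ht : 0 ≤ t) (hts : t ≤ s) (hu : 0 ≤ u) :
    (s + u) ^ μ + t ^ μ ≤ (t + u) ^ μ + s ^ μ := by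
  rcases eq_or_lt_of_le hts with rfl | hts'
  · exact le_rfl
  rcases eq_or_lt_of_le hu with rfl | hu'
  · rw [add_zero, add_zero]; linarith
  have hD : 0 < s + u - t := by linarith
  set A : ℝ := u / (s + u - t) with hA
  set B : ℝ := (s - t) / (s + u - t) with hB
  have hA0 : 0 ≤ A := div_nonneg hu hD.le
  have hB0 : 0 ≤ B := div_nonneg (by linarith) hD.le
  have hAB : A + B = 1 := by rw [hA, hB, ← add_div, div_eq_one_iff_eq hD.ne']; ring
  have hcc := Real.concaveOn_rpow hμ0.le hμ1
  have hmt : t ∈ Set.Ici (0 : ℝ) := Set.mem_Ici.mpr ht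
  have hmsu : s + u ∈ Set.Ici (0 : ℝ) := Set.mem_Ici.mpr (by linarith)
  have h1 := hcc.2 hmt hmsu hA0 hB0 hAB
  have h2 := hcc.2 hmt hmsu hB0 hA0 (by linarith)
  simp only [smul_eq_mul] at h1 h2
  have e1 : A * t + B * (s + u) = s := by
    rw [hA, hB, div_mul_eq_mul_div, div_mul_eq_mul_div, ← add_div, div_eq_iff hD.ne']; ring
  have e2 : B * t + A * (s + u) = t + u := by
    rw [hA, hB, div_mul_eq_mul_div, div_mul_eq_mul_div, ← add_div, div_eq_iff hD.ne']; ring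
  rw [e1] at h1
  rw [e2] at h2
  calc (s + u) ^ μ + t ^ μ = (A + B) * ((s + u) ^ μ + t ^ μ) := by rw [hAB]; ring
    _ = (A * t ^ μ + B * (s + u) ^ μ) + (B * t ^ μ + A * (s + u) ^ μ) := by ring
    _ ≤ s ^ μ + (t + u) ^ μ := add_le_add h1 h2
    _ = (t + u) ^ μ + s ^ μ := by ring

lemma key_ineq_s12 {k μ : ℝ} (hk0 : 0 < k) (hμ0 : 0 < μ) (hμ1 : μ ≤ 1)
    {a b : ℝ} (ha : 0 ≤ a) (hb : 0 ≤ b) (hba : b ≤ k * a) :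
    (a + b) ^ μ ≤ a ^ μ + ((1 + k) ^ μ - 1) / k ^ μ * b ^ μ := by
  have hkμ : (0 : ℝ) < k ^ μ := Real.rpow_pos_of_pos hk0 μ
  rw [← mul_le_mul_iff_right₀ hkμ, mul_add, ← mul_assoc, mul_div_cancel₀ _ hkμ.ne']
  have m1 : k ^ μ * (a + b) ^ μ = (k * a + k * b) ^ μ := by
    rw [← Real.mul_rpow hk0.le (by linarith), mul_add]
  have m2 : k ^ μ * a ^ μ = (k * a) ^ μ := (Real.mul_rpow hk0.le ha).symm
  have m3 : (1 + k) ^ μ * b ^ μ = (b + k * b) ^ μ := by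
    rw [← Real.mul_rpow (by linarith) hb, show (1 + k) * b = b + k * b by ring]
  have hs := shift_ineq hμ0 hμ1 hb hba (mul_nonneg hk0.le hb)
  have : ((1 + k) ^ μ - 1) * b ^ μ = (1 + k) ^ μ * b ^ μ - b ^ μ := by ring
  rw [m1, m2, this, m3]
  linarith

lemma aux_ineq {k μ : ℝ} (hk0 : 0 < k) (hk1 : k ≤ 1) (hμ0 : 0 < μ) (hμ1 : μ ≤ 1) :
    ∀ r : ℕ, ∀ x : ℕ → ℝ, (∀ j, 0 ≤ x j) → (∀ j, x (j + 1) ≤ k * x j) →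
      (∀ j, r ≤ j → x j = 0) →
    (∑ j ∈ Finset.range r, x j) ^ μ ≤
      ∑ j ∈ Finset.range r, (((1 + k) ^ μ - 1) / k ^ μ) ^ hammingWeight j * (x j) ^ μ := by
  intro r
  induction r using Nat.strong_induction_on with
  | _ r ih =>
    intro x hx hchain hzero
    set K : ℝ := ((1 + k) ^ μ - 1) / k ^ μ with hKdef
    have hK0 : 0 ≤ K := by
      apply div_nonneg _ (Real.rpow_pos_of_pos hk0 μ).le
      have : (1 : ℝ) ^ μ ≤ (1 + k) ^ μ :=
        Real.rpow_le_rpow (by norm_num) (by linarith) hμ0.le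
      rw [Real.one_rpow] at this
      linarith
    match r with
    | 0 => simp [Real.zero_rpow hμ0.ne']
    | 1 =>
      simp only [Finset.sum_range_one]
      have : hammingWeight 0 = 0 := by simp [hammingWeight]
      rw [this, pow_zero, one_mul]
    | (n + 2) =>
      set r := n + 2 with hr
      set m := (n + 3) / 2 with hm
      have hmr : m < r := by omega
      have h2m : 2 * m = r ∨ 2 * m = r + 1 := by omega
      set y : ℕ → ℝ := fun i => x (2 * i) + x (2 * i + 1) with hy
      have hy0 : ∀ i, 0 ≤ y i := fun i => add_nonneg (hx _) (hx _)
      have hychain : ∀ i, y (i + 1) ≤ k * y i := by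
        intro i
        have h1 : x (2 * i + 1) ≤ k * x (2 * i) := hchain (2 * i)
        have h2 : x (2 * i + 2) ≤ k * x (2 * i + 1) := hchain (2 * i + 1)
        have h3 : x (2 * i + 3) ≤ k * x (2 * i + 2) := hchain (2 * i + 2)
        have hx0 := hx (2 * i); have hx1 := hx (2 * i + 1); have hx2 := hx (2 * i + 2)
        show x (2 * (i + 1)) + x (2 * (i + 1) + 1) ≤ k * (x (2 * i) + x (2 * i + 1))
        have e2 : 2 * (i + 1) = 2 * i + 2 := by ring
        rw [e2, show 2 * i + 2 + 1 = 2 * i + 3 by ring]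
        have c1 : x (2 * i + 2) ≤ k * (k * x (2 * i)) :=
          h2.trans (mul_le_mul_of_nonneg_left h1 hk0.le)
        have c2 : k * (k * x (2 * i)) ≤ k * x (2 * i) := by
          nlinarith [mul_nonneg (mul_nonneg hk0.le hx0) (sub_nonneg.mpr hk1)]
        have d1 : x (2 * i + 3) ≤ k * (k * x (2 * i + 1)) :=
          h3.trans (mul_le_mul_of_nonneg_left h2 hk0.le)
        have d2 : k * (k * x (2 * i + 1)) ≤ k * x (2 * i + 1) := by
          nlinarith [mul_nonneg (mul_nonneg hk0.le hx1) (sub_nonneg.mpr hk1)]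
        linarith [c1, c2, d1, d2]
      have hyzero : ∀ i, m ≤ i → y i = 0 := by
        intro i hi
        have e0 : x (2 * i) = 0 := hzero _ (by omega)
        have e1 : x (2 * i + 1) = 0 := hzero _ (by omega)
        simp [hy, e0, e1]
      have pair : ∀ (f : ℕ → ℝ) (M : ℕ),
          ∑ i ∈ Finset.range M, (f (2 * i) + f (2 * i + 1)) =
            ∑ j ∈ Finset.range (2 * M), f j := by
        intro f M
        induction M with
        | zero => simp
        | succ M ihM =>
          rw [Finset.sum_range_succ, ihM, show 2 * (M + 1) = (2 * M + 1) + 1 by ring,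
            Finset.sum_range_succ, Finset.sum_range_succ]
          ring
      have IH := ih m hmr y hy0 hychain hyzero
      -- left side
      have lhs_eq : ∑ i ∈ Finset.range m, y i = ∑ j ∈ Finset.range r, x j := by
        rw [show (∑ i ∈ Finset.range m, y i) =
            ∑ i ∈ Finset.range m, (x (2 * i) + x (2 * i + 1)) from rfl, pair x m]
        rcases h2m with h | h
        · rw [h]
        · rw [h, Finset.sum_range_succ, hzero r le_rfl, add_zero]
      -- right side
      have step : ∀ i, K ^ hammingWeight i * (y i) ^ μ ≤
          K ^ hammingWeight (2 * i) * (x (2 * i)) ^ μ +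
            K ^ hammingWeight (2 * i + 1) * (x (2 * i + 1)) ^ μ := by
        intro i
        have hkey := key_ineq_s12 hk0 hμ0 hμ1 (hx (2 * i)) (hx (2 * i + 1)) (hchain (2 * i))
        have hKpow : (0 : ℝ) ≤ K ^ hammingWeight i := pow_nonneg hK0 _
        calc K ^ hammingWeight i * (y i) ^ μ
            ≤ K ^ hammingWeight i * ((x (2 * i)) ^ μ + K * (x (2 * i + 1)) ^ μ) :=
              mul_le_mul_of_nonneg_left hkey hKpow
          _ = K ^ hammingWeight (2 * i) * (x (2 * i)) ^ μ +
              K ^ hammingWeight (2 * i + 1) * (x (2 * i + 1)) ^ μ := by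
              rw [hw_two_mul, hw_two_mul_add_one, pow_succ]; ring
      have rhs_le : ∑ i ∈ Finset.range m, K ^ hammingWeight i * (y i) ^ μ ≤
          ∑ j ∈ Finset.range r, K ^ hammingWeight j * (x j) ^ μ := by
        calc ∑ i ∈ Finset.range m, K ^ hammingWeight i * (y i) ^ μ
            ≤ ∑ i ∈ Finset.range m, (K ^ hammingWeight (2 * i) * (x (2 * i)) ^ μ +
                K ^ hammingWeight (2 * i + 1) * (x (2 * i + 1)) ^ μ) :=
              Finset.sum_le_sum fun i _ => step i
          _ = ∑ j ∈ Finset.range (2 * m), K ^ hammingWeight j * (x j) ^ μ :=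
              pair (fun j => K ^ hammingWeight j * (x j) ^ μ) m
          _ ≤ ∑ j ∈ Finset.range r, K ^ hammingWeight j * (x j) ^ μ := by
              rcases h2m with h | h
              · rw [h]
              · rw [h, Finset.sum_range_succ, hzero r le_rfl,
                  Real.zero_rpow hμ0.ne', mul_zero, add_zero]
      calc (∑ j ∈ Finset.range r, x j) ^ μ = (∑ i ∈ Finset.range m, y i) ^ μ := by
            rw [lhs_eq]
        _ ≤ ∑ i ∈ Finset.range m, K ^ hammingWeight i * (y i) ^ μ := IH
        _ ≤ ∑ j ∈ Finset.range r, K ^ hammingWeight j * (x j) ^ μ := rhs_le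

theorem stmt_12 (r : ℕ) (hr : 1 ≤ r) (x : ℕ → ℝ) (hx : ∀ j, 0 ≤ x j)
    (k : ℝ) (hk0 : 0 < k) (hk1 : k ≤ 1)
    (hcond : ∀ j, j ≤ r - 2 → k * x j ≥ x (j + 1))
    (μ : ℝ) (hμ0 : 0 < μ) (hμ1 : μ ≤ 1) :
    (∑ j ∈ Finset.range r, x j) ^ μ ≤
      ∑ j ∈ Finset.range r, (((1 + k) ^ μ - 1) / k ^ μ) ^ hammingWeight j * (x j) ^ μ := by
  set x' : ℕ → ℝ := fun j => if j < r then x j else 0 with hx'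
  have hx'0 : ∀ j, 0 ≤ x' j := by
    intro j; simp only [hx']; split <;> [exact hx j; exact le_rfl]
  have hx'chain : ∀ j, x' (j + 1) ≤ k * x' j := by
    intro j
    by_cases h : j + 1 < r
    · have hj : j < r := by omega
      have := hcond j (by omega)
      simp only [hx', if_pos h, if_pos hj]
      exact this
    · simp only [hx', if_neg h]
      exact mul_nonneg hk0.le (hx'0 j)
  have hx'zero : ∀ j, r ≤ j → x' j = 0 := by
    intro j hj; simp only [hx', if_neg (by omega : ¬ j < r)]
  have := aux_ineq hk0 hk1 hμ0 hμ1 r x' hx'0 hx'chain hx'zero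
  have e1 : ∑ j ∈ Finset.range r, x' j = ∑ j ∈ Finset.range r, x j :=
    Finset.sum_congr rfl fun j hj => by
      simp [hx', if_pos (Finset.mem_range.mp hj)]
  have e2 : ∑ j ∈ Finset.range r, (((1 + k) ^ μ - 1) / k ^ μ) ^ hammingWeight j * (x' j) ^ μ =
      ∑ j ∈ Finset.range r, (((1 + k) ^ μ - 1) / k ^ μ) ^ hammingWeight j * (x j) ^ μ :=
    Finset.sum_congr rfl fun j hj => by
      simp [hx', if_pos (Finset.mem_range.mp hj)]
  rw [e1, e2] at this
  exact this
end

section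
/- Let r ≥ 1 and let x₀, …, x_{r-1} be nonnegative reals satisfying k · x_l ≥ Σ_{j=l+1}^{r-1} x_j for all l = 0, …, r-2, where 0 < k ≤ 1. Then for any μ with 0 < μ ≤ 1, (Σ_{j=0}^{r-1} x_j)^μ ≤ Σ_{j=0}^{r-1} K^j · x_j^μ, where K = ((1+k)^μ - 1)/k^μ. -/
open Finset Real

/-- Concave shifted-difference inequality for `x ↦ x ^ μ`. -/
lemma aux_shift (μ : ℝ) (hμ0 : 0 < μ) (hμ1 : μ ≤ 1)
    (a b c : ℝ) (ha : 0 ≤ a) (hab : a ≤ b) (hc : 0 ≤ c) :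
    (b + c) ^ μ + a ^ μ ≤ (a + c) ^ μ + b ^ μ := by
  have hconc := Real.concaveOn_rpow hμ0.le hμ1
  rcases eq_or_lt_of_le hab with rfl | hab'
  · exact le_rfl
  · rcases eq_or_lt_of_le hc with rfl | hc'
    · simp only [add_zero]; linarith
    · set D : ℝ := b + c - a with hD
      have hD0 : 0 < D := by linarith
      set lam : ℝ := c / D with hlam
      have hlam0 : 0 < lam := div_pos hc' hD0
      have hlam1 : lam < 1 := (div_lt_one hD0).2 (by linarith)
      have hmem1 : a ∈ Set.Ici (0:ℝ) := ha
      have hmem2 : b + c ∈ Set.Ici (0:ℝ) := by simp; linarith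
      have h1 := hconc.2 hmem1 hmem2 (by linarith : (0:ℝ) ≤ 1 - lam) hlam0.le (by ring)
      have h2 := hconc.2 hmem1 hmem2 hlam0.le (by linarith : (0:ℝ) ≤ 1 - lam) (by ring)
      have hlD : lam * (b + c - a) = c := by
        rw [hlam, ← hD]; exact div_mul_cancel₀ c hD0.ne'
      have e1 : (1 - lam) • a + lam • (b + c) = a + c := by
        field_simp [hlam, smul_eq_mul]; linear_combination hlD
      have e2 : lam • a + (1 - lam) • (b + c) = b := by
        field_simp [hlam, smul_eq_mul]; linear_combination (-1 : ℝ) * hlD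
      rw [e1] at h1; rw [e2] at h2
      simp only [smul_eq_mul] at h1 h2
      linarith

lemma aux_ratio (μ : ℝ) (hμ0 : 0 < μ) (hμ1 : μ ≤ 1) (k : ℝ) (hk0 : 0 < k)
    (t : ℝ) (ht : 0 < t) (htk : t ≤ k) :
    ((1 + t) ^ μ - 1) * k ^ μ ≤ ((1 + k) ^ μ - 1) * t ^ μ := by
  have h := aux_shift μ hμ0 hμ1 t k (t * k) ht.le htk (by positivity)
  have e1 : k + t * k = k * (1 + t) := by ring
  have e2 : t + t * k = t * (1 + k) := by ring
  rw [e1, e2, Real.mul_rpow hk0.le (by linarith), Real.mul_rpow ht.le (by linarith)] at h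
  nlinarith

lemma aux_key (μ : ℝ) (hμ0 : 0 < μ) (hμ1 : μ ≤ 1) (k : ℝ) (hk0 : 0 < k)
    (a b : ℝ) (ha : 0 ≤ a) (hb : 0 ≤ b) (hba : b ≤ k * a) :
    (a + b) ^ μ ≤ a ^ μ + ((1 + k) ^ μ - 1) / k ^ μ * b ^ μ := by
  rcases eq_or_lt_of_le hb with rfl | hb'
  · simp [Real.zero_rpow hμ0.ne']
  · have ha' : 0 < a := by nlinarith
    set t : ℝ := b / a with htdef
    have ht : 0 < t := div_pos hb' ha'
    have htk : t ≤ k := (div_le_iff₀ ha').2 (by linarith [hba])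
    have hkμ : (0:ℝ) < k ^ μ := Real.rpow_pos_of_pos hk0 μ
    have hr := aux_ratio μ hμ0 hμ1 k hk0 t ht htk
    have h2 : (1 + t) ^ μ ≤ 1 + ((1 + k) ^ μ - 1) / k ^ μ * t ^ μ := by
      rw [div_mul_eq_mul_div, ← sub_le_iff_le_add', le_div_iff₀ hkμ]
      linarith
    have e : a + b = a * (1 + t) := by rw [htdef]; field_simp
    rw [e, Real.mul_rpow ha'.le (by linarith)]
    calc a ^ μ * (1 + t) ^ μ ≤ a ^ μ * (1 + ((1 + k) ^ μ - 1) / k ^ μ * t ^ μ) := by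
          apply mul_le_mul_of_nonneg_left h2 (Real.rpow_nonneg ha'.le μ)
      _ = a ^ μ + ((1 + k) ^ μ - 1) / k ^ μ * (a ^ μ * t ^ μ) := by ring
      _ = a ^ μ + ((1 + k) ^ μ - 1) / k ^ μ * b ^ μ := by
          rw [← Real.mul_rpow ha'.le ht.le, htdef, mul_div_cancel₀ _ ha'.ne']

lemma aux_main (μ : ℝ) (hμ0 : 0 < μ) (hμ1 : μ ≤ 1) (k : ℝ) (hk0 : 0 < k) :
    ∀ (r : ℕ) (x : ℕ → ℝ), (∀ j, 0 ≤ x j) →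
      (∀ l, l + 2 ≤ r → ∑ j ∈ Finset.Ico (l + 1) r, x j ≤ k * x l) →
      (∑ j ∈ Finset.range r, x j) ^ μ ≤
        ∑ j ∈ Finset.range r, (((1 + k) ^ μ - 1) / k ^ μ) ^ j * (x j) ^ μ := by
  intro r
  induction r with
  | zero => intro x _ _; simp [Real.zero_rpow hμ0.ne']
  | succ r ih =>
    intro x hx hcond
    set K : ℝ := ((1 + k) ^ μ - 1) / k ^ μ with hK
    have hK0 : 0 ≤ K := by
      apply div_nonneg _ (Real.rpow_pos_of_pos hk0 μ).le
      have : (1:ℝ) ≤ (1 + k) ^ μ := Real.one_le_rpow (by linarith) hμ0.le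
      linarith
    set y : ℕ → ℝ := fun j => x (j + 1) with hy
    have hycond : ∀ l, l + 2 ≤ r → ∑ j ∈ Finset.Ico (l + 1) r, y j ≤ k * y l := by
      intro l hl
      have h := hcond (l + 1) (by omega)
      rw [Finset.sum_Ico_eq_sum_range] at h ⊢
      have hidx : r + 1 - (l + 1 + 1) = r - (l + 1) := by omega
      rw [hidx] at h
      refine le_trans (le_of_eq (Finset.sum_congr rfl fun i _ => ?_)) h
      show x (l + 1 + i + 1) = x (l + 1 + 1 + i)
      congr 1; omega
    have ihy := ih y (fun j => hx _) hycond
    set S : ℝ := ∑ j ∈ Finset.range r, y j with hS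
    have hS0 : 0 ≤ S := Finset.sum_nonneg fun j _ => hx _
    have hSk : S ≤ k * x 0 := by
      rcases Nat.eq_zero_or_pos r with rfl | hr'
      · simp only [hS, Finset.range_zero, Finset.sum_empty]
        exact mul_nonneg hk0.le (hx 0)
      · have h := hcond 0 (by omega)
        rw [Finset.sum_Ico_eq_sum_range] at h
        have : r + 1 - (0 + 1) = r := by omega
        rw [this] at h
        calc S = ∑ i ∈ Finset.range r, x (0 + 1 + i) := by
              apply Finset.sum_congr rfl; intro i _
              show x (i + 1) = x (0 + 1 + i); congr 1; omega
          _ ≤ k * x 0 := h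
    have hsum : ∑ j ∈ Finset.range (r + 1), x j = x 0 + S := by
      rw [Finset.sum_range_succ']; ring
    rw [hsum]
    calc (x 0 + S) ^ μ ≤ (x 0) ^ μ + K * S ^ μ :=
          aux_key μ hμ0 hμ1 k hk0 (x 0) S (hx 0) hS0 hSk
      _ ≤ (x 0) ^ μ + K * ∑ j ∈ Finset.range r, K ^ j * (y j) ^ μ := by
          have := mul_le_mul_of_nonneg_left ihy hK0
          linarith
      _ = ∑ j ∈ Finset.range (r + 1), K ^ j * (x j) ^ μ := by
          rw [Finset.sum_range_succ', Finset.mul_sum, pow_zero, one_mul, add_comm]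
          congr 1
          apply Finset.sum_congr rfl
          intro i _
          show K * (K ^ i * x (i + 1) ^ μ) = K ^ (i + 1) * x (i + 1) ^ μ
          rw [pow_succ]; ring

theorem stmt_13 (r : ℕ) (hr : 1 ≤ r) (x : ℕ → ℝ) (hx : ∀ j, 0 ≤ x j)
    (k : ℝ) (hk0 : 0 < k) (hk1 : k ≤ 1)
    (hcond : ∀ l, l ≤ r - 2 → k * x l ≥ ∑ j ∈ Finset.Ico (l + 1) r, x j)
    (μ : ℝ) (hμ0 : 0 < μ) (hμ1 : μ ≤ 1) :
    (∑ j ∈ Finset.range r, x j) ^ μ ≤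
      ∑ j ∈ Finset.range r, (((1 + k) ^ μ - 1) / k ^ μ) ^ j * (x j) ^ μ := by
  exact aux_main μ hμ0 hμ1 k hk0 r x hx (fun l hl => hcond l (by omega))
end
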